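/- Let H be a complex Hilbert space, A : H →L[ℂ] H a continuous linear self-adjoint operator, and ψ ∈ H a unit vector. Then, as t → 0, the quantity −ln |⟨ψ, exp(−itA)ψ⟩|² equals t²·(⟨ψ, A²ψ⟩ − ⟨ψ, Aψ⟩²) + O(t³); i.e. the function t ↦ −Real.log |⟨ψ, exp(−itA)ψ⟩|² − t²·(re⟨ψ, A(Aψ)⟩ − (re⟨ψ, Aψ⟩)²) is O(t³) in a neighbourhood of t = 0. (This is the leading-order growth of the geometric entanglement of an initially separable state under unitary evolution generated by A.) -/

import Mathlib

open scoped InnerProductSpace Topology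
open Asymptotics Filter NormedSpace

/-! With `z = -it`, the power series of `exp` gives `exp (zA) = 1 + zA + z²A²/2 + O(t³)` in
operator norm, so `⟨ψ, exp (-itA) ψ⟩ = 1 - it⟨A⟩ - t²⟨A²⟩/2 + O(t³)`, where `⟨A⟩ = ⟨ψ, Aψ⟩` and
`⟨A²⟩` are real because `A` is self-adjoint. The squared modulus is then
`1 - t² (⟨A²⟩ - ⟨A⟩²) + O(t³)`, and `-log (1 + x) = -x + O(x²)` with `x = O(t²)`. -/

section

variable {𝕂 𝔸 : Type*} [RCLike 𝕂] [NormedRing 𝔸] [NormedAlgebra 𝕂 𝔸] [CompleteSpace 𝔸]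

theorem NormedSpace.exp_sub_quadratic_isBigO :
    (fun x : 𝔸 => exp x - (1 + x + (2⁻¹ : 𝕂) • x ^ 2)) =O[𝓝 0] fun x => ‖x‖ ^ 3 := by
  simpa [FormalMultilinearSeries.partialSum, Finset.sum_range_succ, expSeries_apply_eq, sq] using
    (exp_hasFPowerSeriesAt_zero (𝕂 := 𝕂) (𝔸 := 𝔸)).isBigO_sub_partialSum_pow 3

theorem NormedSpace.exp_smul_sub_quadratic_isBigO (a : 𝔸) :
    (fun z : 𝕂 => exp (z • a) - (1 + z • a + (z ^ 2 / 2) • a ^ 2)) =O[𝓝 0] fun z => z ^ 3 := by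
  have hlim : Tendsto (fun z : 𝕂 => z • a) (𝓝 0) (𝓝 0) := by
    simpa using (tendsto_id (x := 𝓝 (0 : 𝕂))).smul_const a
  have hnorm : (fun z : 𝕂 => ‖z • a‖ ^ 3) =O[𝓝 0] fun z => z ^ 3 :=
    IsBigO.of_bound (‖a‖ ^ 3) (Eventually.of_forall fun z => by
      simp [norm_smul, mul_pow, mul_comm])
  refine ((exp_sub_quadratic_isBigO (𝕂 := 𝕂)).comp_tendsto hlim |>.trans hnorm).congr_left
    fun z => ?_
  simp only [Function.comp_apply, smul_pow, smul_smul]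
  ring_nf

end

theorem Real.log_one_add_sub_self_isBigO :
    (fun x : ℝ => Real.log (1 + x) - x) =O[𝓝 0] fun x => x ^ 2 := by
  have hlim : Tendsto (fun x : ℝ => (x : ℂ)) (𝓝 0) (𝓝 0) := by
    simpa using Complex.continuous_ofReal.tendsto 0
  have hC := (Complex.log_sub_self_isBigO.comp_tendsto hlim).norm_left.norm_right
  refine (hC.congr' ?_ ?_).of_norm_left.of_norm_right
  · filter_upwards [Ioi_mem_nhds (show (-1 : ℝ) < 0 by norm_num)] with x hx
    have h1 : (0 : ℝ) ≤ 1 + x := by linarith [Set.mem_Ioi.mp hx]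
    simp only [Function.comp_apply]
    rw [← Complex.norm_real, Complex.ofReal_sub, Complex.ofReal_log h1, Complex.ofReal_add,
      Complex.ofReal_one]
  · exact Eventually.of_forall fun x => by simp

theorem sq_norm_sub_sq_norm_isBigO {α E : Type*} [SeminormedAddCommGroup E] {l : Filter α}
    {f g : α → E} {u : α → ℝ} (hfg : (fun x => f x - g x) =O[l] u)
    (hf : f =O[l] fun _ => (1 : ℝ)) (hg : g =O[l] fun _ => (1 : ℝ)) :
    (fun x => ‖f x‖ ^ 2 - ‖g x‖ ^ 2) =O[l] u := by
  have hle : ∀ x, ‖‖f x‖ ^ 2 - ‖g x‖ ^ 2‖ ≤ ‖f x - g x‖ * (‖f x‖ + ‖g x‖) := fun x => by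
    have hsum : 0 ≤ ‖f x‖ + ‖g x‖ := by positivity
    rw [sq_sub_sq, Real.norm_eq_abs, abs_mul, mul_comm, abs_of_nonneg hsum]
    exact mul_le_mul_of_nonneg_right (abs_norm_sub_norm_le _ _) hsum
  refine (IsBigO.of_norm_le hle).trans ?_
  simpa using hfg.norm_left.mul (hf.norm_left.add hg.norm_left)

theorem Complex.sq_norm_sub_isBigO_of_sub_isBigO {f : ℝ → ℂ} {a b : ℝ}
    (hf : (fun t : ℝ => f t - (1 - I * t * a - t ^ 2 * b / 2)) =O[𝓝 0] fun t => t ^ 3) :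
    (fun t : ℝ => ‖f t‖ ^ 2 - (1 - t ^ 2 * (b - a ^ 2))) =O[𝓝 0] fun t => t ^ 3 := by
  set c : ℝ → ℂ := fun t => 1 - I * t * a - t ^ 2 * b / 2
  have hc : c =O[𝓝 0] fun _ => (1 : ℝ) :=
    (Continuous.tendsto (by fun_prop) 0).isBigO_one ℝ
  have hcube : (fun t : ℝ => t ^ 3) =O[𝓝 0] fun _ => (1 : ℝ) :=
    (Continuous.tendsto (by fun_prop) 0).isBigO_one ℝ
  have hf1 : f =O[𝓝 0] fun _ => (1 : ℝ) :=
    (hc.add (hf.trans hcube)).congr_left fun t => add_sub_cancel _ _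
  have hnorm_c : ∀ t : ℝ, ‖c t‖ ^ 2 = 1 - t ^ 2 * (b - a ^ 2) + b ^ 2 / 4 * t ^ 4 := fun t => by
    rw [Complex.sq_norm, Complex.normSq_apply]
    simp [c, pow_two]
    ring
  have hquartic : (fun t : ℝ => b ^ 2 / 4 * t ^ 4) =O[𝓝 0] fun t => t ^ 3 :=
    (isLittleO_pow_pow (by norm_num)).isBigO.const_mul_left _
  refine ((sq_norm_sub_sq_norm_isBigO hf hf1 hc).add hquartic).congr_left fun t => ?_
  rw [hnorm_c]
  ring

theorem Real.neg_log_sub_isBigO_of_sub_isBigO {g : ℝ → ℝ} {v : ℝ}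
    (hg : (fun t : ℝ => g t - (1 - t ^ 2 * v)) =O[𝓝 0] fun t => t ^ 3) :
    (fun t : ℝ => -Real.log (g t) - t ^ 2 * v) =O[𝓝 0] fun t => t ^ 3 := by
  have hx : (fun t => g t - 1) =O[𝓝 0] fun t : ℝ => t ^ 2 :=
    (((isBigO_refl (fun t : ℝ => t ^ 2) _).const_mul_left (-v)).add
      (hg.trans (isLittleO_pow_pow (by norm_num)).isBigO)).congr_left fun t => by ring
  have hx0 : Tendsto (fun t => g t - 1) (𝓝 0) (𝓝 0) :=
    hx.trans_tendsto (Continuous.tendsto' (by fun_prop) 0 0 (by norm_num))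
  have hsq : (fun t => (g t - 1) ^ 2) =O[𝓝 0] fun t : ℝ => t ^ 3 :=
    ((hx.pow 2).congr_right fun t => by ring).trans
      (isLittleO_pow_pow (𝕜 := ℝ) (show 3 < 4 by norm_num)).isBigO
  have hlog := (Real.log_one_add_sub_self_isBigO.comp_tendsto hx0).trans hsq
  refine (hlog.neg_left.sub hg).congr_left fun t => ?_
  simp only [Function.comp_apply, add_sub_cancel]
  ring

/-- Leading-order growth of the geometric entanglement of an initially separable state:
`-ln |⟨ψ, exp(-itA) ψ⟩|² = t² (⟨ψ, A²ψ⟩ - ⟨ψ, Aψ⟩²) + O(t³)` as `t → 0`. -/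
theorem geometric_entanglement_isBigO
    {H : Type*} [NormedAddCommGroup H] [InnerProductSpace ℂ H] [CompleteSpace H]
    (A : H →L[ℂ] H) (hA : IsSelfAdjoint A) (ψ : H) (hψ : ‖ψ‖ = 1) :
    (fun t : ℝ =>
        (-Real.log (‖⟪ψ, (NormedSpace.exp (((-Complex.I) * (t : ℂ)) • A)) ψ⟫_ℂ‖ ^ 2))
          - t ^ 2 * ((⟪ψ, A (A ψ)⟫_ℂ).re - ((⟪ψ, A ψ⟫_ℂ).re) ^ 2))
      =O[nhds 0] (fun t : ℝ => t ^ 3) := by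
  set a := (⟪ψ, A ψ⟫_ℂ).re
  set b := (⟪ψ, A (A ψ)⟫_ℂ).re
  have ha : ⟪ψ, A ψ⟫_ℂ = a := (hA.isSymmetric.coe_re_inner_self_apply ψ).symm
  have hb : ⟪ψ, A (A ψ)⟫_ℂ = b := ((hA.pow 2).isSymmetric.coe_re_inner_self_apply ψ).symm
  have hz : Tendsto (fun t : ℝ => -Complex.I * t) (𝓝 0) (𝓝 0) :=
    Continuous.tendsto' (by fun_prop) 0 0 (by simp)
  have hcube : (fun t : ℝ => (-Complex.I * t) ^ 3) =O[𝓝 0] fun t => t ^ 3 :=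
    isBigO_of_le _ fun t => by simp
  have hexpect : (fun t : ℝ => ⟪ψ, exp ((-Complex.I * t) • A) ψ⟫_ℂ
      - (1 - Complex.I * t * a - t ^ 2 * b / 2)) =O[𝓝 0] fun t => t ^ 3 := by
    refine ((((innerSL ℂ ψ).comp (ContinuousLinearMap.apply ℂ H ψ)).isBigO_comp _ _).trans
      (((exp_smul_sub_quadratic_isBigO A).comp_tendsto hz).trans hcube)).congr_left fun t => ?_
    simp [inner_sub_right, inner_add_right, inner_smul_right, hψ, ha, hb]
    linear_combination (t : ℂ) ^ 2 * b / 2 * Complex.I_sq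
  exact Real.neg_log_sub_isBigO_of_sub_isBigO (Complex.sq_norm_sub_isBigO_of_sub_isBigO hexpect)
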